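/- arXiv:1402.1304 — 4 statements merged into one kernel-verified Lean document; each statement's English description precedes it below -/
import Mathlib

section
/- If C is a cosine family on a Banach space satisfying sup over t ∈ ℝ of ‖C(t) − I‖ < 3/2, then C(t) = I for all t ∈ ℝ. -/
theorem zero_three_half_law_on_line {X : Type*} [NormedAddCommGroup X] [NormedSpace ℝ X]
    (C : ℝ → X →L[ℝ] X) (h0 : C 0 = 1)
    (hd : ∀ t s : ℝ, (2 : ℝ) • (C t * C s) = C (t + s) + C (t - s))
    (r : ℝ) (hr : r < 3 / 2) (hbound : ∀ t : ℝ, ‖C t - 1‖ ≤ r) :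
    ∀ t : ℝ, C t = 1 := by
  set S : Set ℝ := Set.range (fun t => ‖C t - 1‖) with hS
  have hne : S.Nonempty := ⟨‖C 0 - 1‖, 0, rfl⟩
  have hbdd : BddAbove S := ⟨r, by rintro x ⟨t, rfl⟩; exact hbound t⟩
  set M : ℝ := sSup S with hM
  have hle : ∀ t : ℝ, ‖C t - 1‖ ≤ M := fun t => le_csSup hbdd ⟨t, rfl⟩
  have hM0 : 0 ≤ M := le_trans (norm_nonneg _) (hle 0)
  have hMr : M ≤ r := csSup_le hne (by rintro x ⟨t, rfl⟩; exact hbound t)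
  -- key identity: 4 • (C t - 1) = (C (t+t) - 1) - 2 • ((C t - 1) * (C t - 1))
  have key : ∀ t : ℝ, (4 : ℝ) • (C t - 1)
      = (C (t + t) - 1) - (2 : ℝ) • ((C t - 1) * (C t - 1)) := by
    intro t
    have h := hd t t
    rw [sub_self, h0] at h
    have expand : (C t - 1) * (C t - 1) = C t * C t - C t - C t + 1 := by noncomm_ring
    have hCtt : C (t + t) = (2 : ℝ) • (C t * C t) - 1 := by rw [eq_sub_iff_add_eq]; exact h.symm
    rw [hCtt, expand]
    module
  have step : ∀ t : ℝ, 4 * ‖C t - 1‖ ≤ M + 2 * (M * M) := by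
    intro t
    have h1 : ‖(4 : ℝ) • (C t - 1)‖ = 4 * ‖C t - 1‖ := by
      rw [norm_smul (4:ℝ) (C t - 1)]; norm_num
    calc 4 * ‖C t - 1‖ = ‖(4 : ℝ) • (C t - 1)‖ := h1.symm
      _ = ‖(C (t + t) - 1) - (2 : ℝ) • ((C t - 1) * (C t - 1))‖ := by rw [key t]
      _ ≤ ‖C (t + t) - 1‖ + ‖(2 : ℝ) • ((C t - 1) * (C t - 1))‖ := norm_sub_le _ _
      _ ≤ M + 2 * (M * M) := by
          have h2 : ‖(2 : ℝ) • ((C t - 1) * (C t - 1))‖ ≤ 2 * (M * M) := by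
            rw [norm_smul (2:ℝ) ((C t - 1) * (C t - 1))]
            have := norm_mul_le (C t - 1) (C t - 1)
            have hm := hle t
            simp only [Real.norm_ofNat]
            nlinarith [norm_nonneg (C t - 1)]
          exact add_le_add (hle (t + t)) h2
  have hsup : 4 * M ≤ M + 2 * (M * M) := by
    have : M ≤ (M + 2 * (M * M)) / 4 := csSup_le hne (by
      rintro x ⟨t, rfl⟩; linarith [step t])
    linarith
  have hMz : M = 0 := by nlinarith
  intro t
  have : ‖C t - 1‖ ≤ 0 := hMz ▸ hle t
  have : C t - 1 = 0 := by
    have := le_antisymm this (norm_nonneg _)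
    exact norm_eq_zero.mp this
  exact sub_eq_zero.mp this
end

section
/- Let T : [0,∞) → B(X) be a semigroup of bounded operators (T(0) = I, T(t+s) = T(t)T(s)) with sup over t ≥ 0 of ‖T(t) − I‖ < 1. Then T(t) = I for all t ≥ 0. -/
theorem semigroup_zero_one_law_on_line {X : Type*} [NormedAddCommGroup X] [NormedSpace ℝ X]
    (T : ℝ → X →L[ℝ] X) (h0 : T 0 = 1)
    (hadd : ∀ t s : ℝ, 0 ≤ t → 0 ≤ s → T (t + s) = T t * T s)
    (r : ℝ) (hr : r < 1) (hbound : ∀ t : ℝ, 0 ≤ t → ‖T t - 1‖ ≤ r) :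
    ∀ t : ℝ, 0 ≤ t → T t = 1 := by
  have hr0 : 0 ≤ r := by
    have := hbound 0 le_rfl
    rw [h0] at this
    simpa using this
  have hk : (0:ℝ) < 2 - r := by linarith
  have hklt : 1 / (2 - r) < 1 := by
    rw [div_lt_one hk]; linarith
  have hk0 : 0 ≤ 1 / (2 - r) := by positivity
  have key : ∀ n : ℕ, ∀ t : ℝ, 0 ≤ t → ‖T t - 1‖ ≤ r * (1 / (2 - r)) ^ n := by
    intro n
    induction n with
    | zero => simpa using hbound
    | succ n ih =>
      intro t ht
      have h2 : T (t + t) = T t * T t := hadd t t ht ht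
      set A := T t - 1 with hA
      have hid : A + A = (T (t + t) - 1) - A * A := by
        rw [h2, hA]; noncomm_ring
      have h2n : ‖A + A‖ = 2 * ‖A‖ := by
        rw [← two_smul ℝ A, norm_smul]; simp
      have hnorm : 2 * ‖A‖ ≤ ‖T (t + t) - 1‖ + ‖A‖ * ‖A‖ := by
        calc 2 * ‖A‖ = ‖(T (t + t) - 1) - A * A‖ := by rw [← h2n, hid]
          _ ≤ ‖T (t + t) - 1‖ + ‖A * A‖ := norm_sub_le _ _
          _ ≤ ‖T (t + t) - 1‖ + ‖A‖ * ‖A‖ := by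
              gcongr; exact norm_mul_le _ _
      have hTt : ‖T (t + t) - 1‖ ≤ r * (1 / (2 - r)) ^ n := ih (t + t) (by linarith)
      have hAr : ‖A‖ ≤ r := hbound t ht
      have hA0 : 0 ≤ ‖A‖ := norm_nonneg _
      have hstep : ‖A‖ ≤ r * (1 / (2 - r)) ^ n * (1 / (2 - r)) := by
        rw [mul_one_div, le_div_iff₀ hk]
        nlinarith
      calc ‖T t - 1‖ = ‖A‖ := rfl
        _ ≤ r * (1 / (2 - r)) ^ n * (1 / (2 - r)) := hstep
        _ = r * (1 / (2 - r)) ^ (n + 1) := by ring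
  intro t ht
  have htend : Filter.Tendsto (fun n : ℕ => r * (1 / (2 - r)) ^ n)
      Filter.atTop (nhds 0) := by
    simpa using (tendsto_pow_atTop_nhds_zero_of_lt_one hk0 hklt).const_mul r
  have hzero : ‖T t - 1‖ ≤ 0 := ge_of_tendsto' htend (fun n => key n t ht)
  have : T t - 1 = 0 := by rwa [← norm_le_zero_iff]
  exact sub_eq_zero.mp this
end

section
/- Define C(t) on ℓ² (square-summable complex sequences) as the diagonal operator with entries cos(n t), n ∈ ℕ, n ≥ 1. Then C is a strongly continuous cosine family satisfying limsup_{t→0⁺} ‖C(t) − I‖ = 2, and its generator (the diagonal operator with entries −n²) is unbounded. -/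
/-!
`C(t)` is multiplication by the bounded sequence `(cos (n t))ₙ`, so the cosine-family identities
hold coordinatewise, and strong continuity follows from dominated convergence applied to
`‖C(t)x - C(s)x‖ ^ p = ∑ₙ |cos (n t) - cos (n s)| ^ p |xₙ| ^ p`. A diagonal operator has the sup
norm of its symbol as operator norm, so `‖C(t) - 1‖ = supₙ |cos (n t) - 1| ≤ 2`, with equality
at `t = π / n → 0`. On the basis vector `eₙ` the quotient `2 (C(t) - 1) / t²` tends to `-n² eₙ`,
so a bounded generator would have norm at least `n²` for every `n`.
-/

open Filter Topology Real

open scoped ENNReal lp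

namespace lp

variable {ι 𝕜 : Type*} [RCLike 𝕜] {p : ℝ≥0∞}

theorem norm_infty_apply_mul_le (g : ℓ^∞(ι, 𝕜)) (i : ι) (a : 𝕜) : ‖g i * a‖ ≤ ‖g‖ * ‖a‖ := by
  rw [norm_mul]
  exact mul_le_mul_of_nonneg_right (norm_apply_le_norm ENNReal.top_ne_zero g i) (norm_nonneg a)

theorem memℓp_infty_mul (g : ℓ^∞(ι, 𝕜)) (x : ℓ^p(ι, 𝕜)) : Memℓp (⇑g * ⇑x) p :=
  ((lp.memℓp x).norm.const_smul ‖g‖).mono fun i => norm_infty_apply_mul_le g i (x i)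

variable [Fact (1 ≤ p)]

theorem norm_infty_mul_le (g : ℓ^∞(ι, 𝕜)) (x : ℓ^p(ι, 𝕜)) :
    ‖(⟨⇑g * ⇑x, memℓp_infty_mul g x⟩ : ℓ^p(ι, 𝕜))‖ ≤ ‖g‖ * ‖x‖ := by
  have hp : p ≠ 0 := (zero_lt_one.trans_le Fact.out).ne'
  calc _ ≤ ‖((‖g‖ : ℝ) : 𝕜) • x‖ := norm_mono hp fun i => by
        simpa [norm_smul] using norm_infty_apply_mul_le g i (x i)
    _ = ‖g‖ * ‖x‖ := by rw [norm_const_smul hp, RCLike.norm_ofReal, abs_norm]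

variable (p) in
noncomputable def diagonal (g : ℓ^∞(ι, 𝕜)) : ℓ^p(ι, 𝕜) →L[𝕜] ℓ^p(ι, 𝕜) :=
  LinearMap.mkContinuous
    { toFun := fun x => ⟨⇑g * ⇑x, memℓp_infty_mul g x⟩
      map_add' := fun x y => ext <| funext fun i => mul_add (g i) (x i) (y i)
      map_smul' := fun c x => ext <| funext fun i => mul_smul_comm c (g i) (x i) }
    ‖g‖ (norm_infty_mul_le g)

theorem coeFn_diagonal (g : ℓ^∞(ι, 𝕜)) (x : ℓ^p(ι, 𝕜)) : ⇑(diagonal p g x) = ⇑g * ⇑x := rfl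

theorem diagonal_zero : diagonal p (0 : ℓ^∞(ι, 𝕜)) = 0 := by
  ext x i; exact zero_mul (x i)

theorem diagonal_one : diagonal p (1 : ℓ^∞(ι, 𝕜)) = 1 := by
  ext x i; exact one_mul (x i)

theorem diagonal_mul (f g : ℓ^∞(ι, 𝕜)) : diagonal p (f * g) = diagonal p f * diagonal p g := by
  ext x i; exact mul_assoc (f i) (g i) (x i)

theorem diagonal_add (f g : ℓ^∞(ι, 𝕜)) : diagonal p (f + g) = diagonal p f + diagonal p g := by
  ext x i; exact add_mul (f i) (g i) (x i)

theorem diagonal_sub (f g : ℓ^∞(ι, 𝕜)) : diagonal p (f - g) = diagonal p f - diagonal p g := by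
  ext x i; exact sub_mul (f i) (g i) (x i)

theorem diagonal_smul (c : 𝕜) (g : ℓ^∞(ι, 𝕜)) : diagonal p (c • g) = c • diagonal p g := by
  ext x i; exact smul_mul_assoc c (g i) (x i)

theorem diagonal_single [DecidableEq ι] (g : ℓ^∞(ι, 𝕜)) (i : ι) (a : 𝕜) :
    diagonal p g (lp.single p i a) = lp.single p i (g i * a) := by
  ext j
  by_cases hj : j = i <;> simp [coeFn_diagonal, hj]

theorem norm_diagonal (g : ℓ^∞(ι, 𝕜)) : ‖diagonal p g‖ = ‖g‖ := by
  classical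
  have hp : 0 < p := zero_lt_one.trans_le Fact.out
  refine le_antisymm (LinearMap.mkContinuous_norm_le _ (norm_nonneg g) _) ?_
  refine norm_le_of_forall_le (norm_nonneg _) fun i => ?_
  simpa [diagonal_single, lp.norm_single hp] using (diagonal p g).le_opNorm (lp.single p i 1)

theorem continuous_diagonal_apply (hp : p ≠ ∞) {T : Type*} [TopologicalSpace T]
    {g : T → ℓ^∞(ι, 𝕜)} {M : ℝ} (hM : ∀ t, ‖g t‖ ≤ M) (hg : ∀ i, Continuous fun t => g t i)
    (x : ℓ^p(ι, 𝕜)) : Continuous fun t => diagonal p (g t) x := by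
  have hr : 0 < p.toReal := ENNReal.toReal_pos (zero_lt_one.trans_le Fact.out).ne' hp
  refine continuous_iff_continuousAt.2 fun t₀ => ?_
  rw [ContinuousAt, tendsto_iff_norm_sub_tendsto_zero]
  simp_rw [← sub_apply, ← diagonal_sub]
  have hbound : ∀ t i, ‖diagonal p (g t - g t₀) x i‖ ^ p.toReal ≤ (2 * M * ‖x i‖) ^ p.toReal := by
    intro t i
    refine Real.rpow_le_rpow (norm_nonneg _) ((norm_infty_apply_mul_le _ i (x i)).trans ?_) hr.le
    gcongr
    linarith [norm_sub_le (g t) (g t₀), hM t, hM t₀]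
  have hpow : Tendsto (fun t => ‖diagonal p (g t - g t₀) x‖ ^ p.toReal) (𝓝 t₀) (𝓝 0) := by
    simp_rw [norm_rpow_eq_tsum hr]
    rw [← tsum_zero]
    refine tendsto_tsum_of_dominated_convergence (bound := fun i => (2 * M * ‖x i‖) ^ p.toReal)
      ?_ (fun i => ?_) (Eventually.of_forall fun t i => ?_)
    · have h2M : 0 ≤ 2 * M := by linarith [norm_nonneg (g t₀), hM t₀]
      exact (((lp.memℓp x).summable hr).mul_left ((2 * M) ^ p.toReal)).congr fun i =>
        (Real.mul_rpow h2M (norm_nonneg _)).symm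
    · have hcont : Continuous fun t => ‖diagonal p (g t - g t₀) x i‖ ^ p.toReal :=
        show Continuous fun t => ‖(g t i - g t₀ i) * x i‖ ^ p.toReal from
          (Real.continuous_rpow_const hr.le).comp
            ((((hg i).sub continuous_const).mul continuous_const).norm)
      have h0 : ‖diagonal p (g t₀ - g t₀) x i‖ ^ p.toReal = 0 := by
        simp [diagonal_zero, hr.ne']
      exact h0 ▸ hcont.tendsto t₀
    · rw [Real.norm_of_nonneg (by positivity)]
      exact hbound t i
  simpa [Real.rpow_rpow_inv (norm_nonneg _) hr.ne'] using hpow.rpow_const_nhds_zero (inv_pos.2 hr)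

end lp

theorem Real.two_div_sq_mul_cos_mul_sub_one (c : ℝ) {t : ℝ} (ht : t ≠ 0) :
    2 / t ^ 2 * (cos (c * t) - 1) = -c ^ 2 * sinc (c * t / 2) ^ 2 := by
  rcases eq_or_ne c 0 with rfl | hc
  · simp
  have hcos : cos (c * t) = 1 - 2 * sin (c * t / 2) ^ 2 := by
    rw [show c * t = 2 * (c * t / 2) by ring, cos_two_mul', cos_sq']
    ring_nf
  rw [sinc_of_ne_zero (by positivity), hcos]
  field_simp
  ring

theorem Real.tendsto_two_div_sq_mul_cos_mul_sub_one (c : ℝ) :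
    Tendsto (fun t => 2 / t ^ 2 * (cos (c * t) - 1)) (𝓝[≠] 0) (𝓝 (-c ^ 2)) := by
  have h : Tendsto (fun t => -c ^ 2 * sinc (c * t / 2) ^ 2) (𝓝 0) (𝓝 (-c ^ 2)) := by
    have hcont : Continuous fun t => -c ^ 2 * sinc (c * t / 2) ^ 2 := by fun_prop
    simpa using hcont.tendsto 0
  exact (h.mono_left nhdsWithin_le_nhds).congr'
    (eventually_nhdsWithin_of_forall fun t ht => (two_div_sq_mul_cos_mul_sub_one c ht).symm)

noncomputable def cosineSymbol (t : ℝ) : ℓ^∞(ℕ+, ℂ) :=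
  ⟨fun n => (cos (n * t) : ℂ), memℓp_infty ⟨1, by
    rintro _ ⟨n, rfl⟩
    exact (Complex.norm_real _).trans_le (abs_cos_le_one _)⟩⟩

theorem cosineSymbol_apply (t : ℝ) (n : ℕ+) : cosineSymbol t n = cos (n * t) := rfl

theorem cosineSymbol_zero : cosineSymbol 0 = 1 := by
  ext n
  simp [cosineSymbol_apply, lp.infty_coeFn_one]

theorem two_smul_cosineSymbol_mul (t s : ℝ) :
    (2 : ℂ) • (cosineSymbol t * cosineSymbol s) = cosineSymbol (t + s) + cosineSymbol (t - s) := by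
  ext n
  simp only [lp.coeFn_smul, lp.infty_coeFn_mul, lp.coeFn_add, Pi.smul_apply, Pi.mul_apply,
    Pi.add_apply, cosineSymbol_apply, smul_eq_mul, mul_add, mul_sub, cos_add, cos_sub]
  push_cast
  ring

theorem norm_cosineSymbol_le (t : ℝ) : ‖cosineSymbol t‖ ≤ 1 :=
  lp.norm_le_of_forall_le zero_le_one fun _ =>
    (Complex.norm_real _).trans_le (abs_cos_le_one _)

theorem norm_cosineSymbol_sub_one_le (t : ℝ) : ‖cosineSymbol t - 1‖ ≤ 2 := by
  linarith [norm_sub_le (cosineSymbol t) 1, norm_cosineSymbol_le t, norm_one (α := ℓ^∞(ℕ+, ℂ))]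

theorem norm_cosineSymbol_pi_div_sub_one (n : ℕ+) : ‖cosineSymbol (π / n) - 1‖ = 2 := by
  refine (norm_cosineSymbol_sub_one_le _).antisymm ?_
  have h := lp.norm_apply_le_norm ENNReal.top_ne_zero (cosineSymbol (π / n) - 1) n
  rw [lp.coeFn_sub, Pi.sub_apply, cosineSymbol_apply, lp.infty_coeFn_one, Pi.one_apply,
    mul_div_cancel₀ π (by positivity), cos_pi] at h
  norm_num at h
  exact h

theorem frequently_two_le_norm_cosineSymbol_sub_one :
    ∃ᶠ t in 𝓝[>] 0, 2 ≤ ‖cosineSymbol t - 1‖ := by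
  have h : Tendsto (fun k : ℕ => π / (k.succPNat : ℕ)) atTop (𝓝[>] 0) :=
    tendsto_nhdsWithin_iff.2 ⟨(tendsto_const_div_atTop_nhds_zero_nat π).comp
      (tendsto_add_atTop_nat 1), Eventually.of_forall fun k => div_pos pi_pos (by positivity)⟩
  exact h.frequently (Frequently.of_forall fun k =>
    (norm_cosineSymbol_pi_div_sub_one k.succPNat).ge)

section CosineFamily

variable (p : ℝ≥0∞) [Fact (1 ≤ p)]

noncomputable def cosineFamily (t : ℝ) : ℓ^p(ℕ+, ℂ) →L[ℂ] ℓ^p(ℕ+, ℂ) :=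
  lp.diagonal p (cosineSymbol t)

theorem limsup_norm_cosineFamily_sub_one :
    limsup (fun t => ‖cosineFamily p t - 1‖) (𝓝[>] 0) = 2 := by
  simp_rw [cosineFamily, ← lp.diagonal_one, ← lp.diagonal_sub, lp.norm_diagonal]
  have hbdd : ∀ t, ‖cosineSymbol t - 1‖ ≤ 2 := norm_cosineSymbol_sub_one_le
  exact le_antisymm
    (limsup_le_of_le (IsCoboundedUnder.of_frequently_ge
      frequently_two_le_norm_cosineSymbol_sub_one) (Eventually.of_forall hbdd))
    (le_limsup_of_frequently_le frequently_two_le_norm_cosineSymbol_sub_one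
      (isBoundedUnder_of ⟨2, hbdd⟩))

theorem cosineFamily_single_sub_single (t : ℝ) (n : ℕ+) :
    cosineFamily p t (lp.single p n 1) - lp.single p n 1 =
      lp.single p n ((cos (n * t) - 1 : ℝ) : ℂ) := by
  rw [cosineFamily, lp.diagonal_single, ← lp.single_sub, cosineSymbol_apply, mul_one,
    Complex.ofReal_sub, Complex.ofReal_one]

theorem not_exists_cosineFamily_generator :
    ¬∃ A : ℓ^p(ℕ+, ℂ) →L[ℂ] ℓ^p(ℕ+, ℂ),
      ∀ x, Tendsto (fun t : ℝ => (2 / t ^ 2) • (cosineFamily p t x - x)) (𝓝[>] 0) (𝓝 (A x)) := by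
  rintro ⟨A, hA⟩
  have hp : 0 < p := zero_lt_one.trans_le Fact.out
  have hA_single : ∀ n : ℕ+, A (lp.single p n 1) = lp.single p n ((-(n : ℝ) ^ 2 : ℝ) : ℂ) := by
    intro n
    refine tendsto_nhds_unique (hA _) ?_
    simp_rw [cosineFamily_single_sub_single, ← lp.single_smul, Complex.real_smul,
      ← Complex.ofReal_mul]
    have hcont := (lp.isometry_single (E := fun _ : ℕ+ => ℂ) (p := p) n).continuous.comp
      Complex.continuous_ofReal
    exact (hcont.tendsto _).comp
      ((tendsto_two_div_sq_mul_cos_mul_sub_one n).mono_left (nhdsGT_le_nhdsNE 0))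
  obtain ⟨n, hn⟩ := exists_nat_gt ‖A‖
  have h := A.le_opNorm (lp.single p n.succPNat 1)
  rw [hA_single, lp.norm_single hp, lp.norm_single hp, Complex.norm_real, norm_neg, norm_pow,
    Real.norm_natCast, norm_one, mul_one, Nat.succPNat_coe, Nat.cast_succ] at h
  nlinarith

end CosineFamily

theorem diagonal_cosine_example :
    ∃ C : ℝ → (lp (fun _ : ℕ+ => ℂ) 2 →L[ℂ] lp (fun _ : ℕ+ => ℂ) 2),
      (∀ (t : ℝ) (x : lp (fun _ : ℕ+ => ℂ) 2) (n : ℕ+),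
        (C t x : ∀ _ : ℕ+, ℂ) n = (Real.cos (n * t) : ℂ) * (x : ∀ _ : ℕ+, ℂ) n) ∧
      C 0 = 1 ∧
      (∀ t s : ℝ, (2 : ℂ) • (C t * C s) = C (t + s) + C (t - s)) ∧
      (∀ x : lp (fun _ : ℕ+ => ℂ) 2, Continuous fun t : ℝ => C t x) ∧
      Filter.limsup (fun t : ℝ => ‖C t - 1‖) (𝓝[>] 0) = 2 ∧
      ¬∃ A : lp (fun _ : ℕ+ => ℂ) 2 →L[ℂ] lp (fun _ : ℕ+ => ℂ) 2,
        ∀ x, Tendsto (fun t : ℝ => (2 / t ^ 2) • (C t x - x)) (𝓝[>] 0) (𝓝 (A x)) := by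
  refine ⟨cosineFamily 2, fun t x n => rfl, ?_, fun t s => ?_, ?_,
    limsup_norm_cosineFamily_sub_one 2, not_exists_cosineFamily_generator 2⟩
  · rw [cosineFamily, cosineSymbol_zero, lp.diagonal_one]
  · simp only [cosineFamily]
    rw [← lp.diagonal_mul, ← lp.diagonal_smul, two_smul_cosineSymbol_mul, lp.diagonal_add]
  · refine lp.continuous_diagonal_apply ENNReal.ofNat_ne_top norm_cosineSymbol_le fun n => ?_
    simp only [cosineSymbol_apply]
    fun_prop
end

section
/- Let C be a cosine family on a Banach space X satisfying ‖C(t) − I‖ ≤ r for all t ≥ 0. Define C_ext on ℓ²(ℕ; X) by C_ext(t)(x_n) = (C(n t) x_n). Then C_ext is a cosine family on ℓ²(ℕ;X) satisfying ‖C_ext(t) − I‖ ≤ r for all t ≥ 0, and if C is strongly continuous then so is C_ext. -/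
/-!
All identities hold coordinatewise, since the `n`-th coordinate of `C_ext` is the cosine family
`t ↦ C (n * t)`, and `C_ext t - 1` is again diagonal with entries of norm at most `r`. A cosine
family is even, so `‖C u - 1‖ ≤ r` for every real `u`; hence the operators `C_ext t` are uniformly
bounded by `1 + r`, thus equicontinuous, and strong continuity passes from the finitely supported
sequences, which span a dense subspace of `ℓ²`, to all of `ℓ²`.
-/

open Filter Topology
open scoped ENNReal

theorem continuous_apply_of_norm_le_of_dense_span {α 𝕜 E F : Type*} [TopologicalSpace α]
    [NontriviallyNormedField 𝕜] [NormedAddCommGroup E] [NormedSpace 𝕜 E]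
    [NormedAddCommGroup F] [NormedSpace 𝕜 F] {A : α → E →L[𝕜] F} {M : ℝ}
    (hA : ∀ t, ‖A t‖ ≤ M) {D : Set E} (hD : Dense (Submodule.span 𝕜 D : Set E))
    (hAD : ∀ d ∈ D, Continuous fun t => A t d) (y : E) : Continuous fun t => A t y := by
  have hequi : Equicontinuous fun t => (A t : E → F) :=
    ((NormedSpace.equicontinuous_TFAE A).out 5 1).mp (⟨M, hA⟩ : ∃ C, ∀ t, ‖A t‖ ≤ C)
  refine continuous_iff_continuousAt.mpr fun t₀ => ?_
  let S : Submodule 𝕜 E :=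
    { carrier := {y | Tendsto (fun t => A t y) (𝓝 t₀) (𝓝 (A t₀ y))}
      add_mem' := fun hx hy => by simpa using hx.add hy
      zero_mem' := by simp
      smul_mem' := fun c _ hx => by simpa using hx.const_smul c }
  have hS : IsClosed (S : Set E) := hequi.isClosed_setOfPred_tendsto (A t₀).continuous
  have hDS : Submodule.span 𝕜 D ≤ S :=
    Submodule.span_le.mpr fun d hd => (hAD d hd).continuousAt
  exact hS.closure_subset_iff.mpr hDS (hD y)

namespace lp

variable {ι 𝕜 : Type*} {E F : ι → Type*} [NontriviallyNormedField 𝕜]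
  [∀ i, NormedAddCommGroup (E i)] [∀ i, NormedSpace 𝕜 (E i)]
  [∀ i, NormedAddCommGroup (F i)] [∀ i, NormedSpace 𝕜 (F i)] {p : ℝ≥0∞} [Fact (1 ≤ p)]
  [DecidableEq ι]

theorem dense_span_single (hp : p ≠ ⊤) :
    Dense (Submodule.span 𝕜 (⋃ i, Set.range (lp.single (E := E) p i)) : Set (lp E p)) :=
  fun x => mem_closure_of_tendsto (lp.hasSum_single hp x) <| Eventually.of_forall fun _ =>
    Submodule.sum_mem _ fun i _ => Submodule.subset_span (Set.mem_iUnion_of_mem i ⟨x i, rfl⟩)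

theorem mapCLM_single (T : ∀ i, E i →L[𝕜] F i) {K : ℝ} (hK : 0 ≤ K) (hTK : ∀ i, ‖T i‖ ≤ K)
    (i : ι) (v : E i) : mapCLM p T hK hTK (lp.single p i v) = lp.single p i (T i v) :=
  lp.ext <| funext fun j => by
    simp only [mapCLM_apply_coe, lp.single_apply,
      Pi.apply_single (fun j => T j) fun _ => map_zero _]

end lp

section CosineFamily

variable {X : Type*} [NormedAddCommGroup X] [NormedSpace ℝ X] {C : ℝ → X →L[ℝ] X}

theorem cosine_neg (h0 : C 0 = 1)
    (hd : ∀ t s : ℝ, (2 : ℝ) • (C t * C s) = C (t + s) + C (t - s)) (u : ℝ) : C (-u) = C u := by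
  have h := hd 0 u
  rw [h0, one_mul, zero_add, zero_sub, two_smul] at h
  exact (add_left_cancel h).symm

theorem norm_cosine_sub_one_le (h0 : C 0 = 1)
    (hd : ∀ t s : ℝ, (2 : ℝ) • (C t * C s) = C (t + s) + C (t - s)) {r : ℝ}
    (hbound : ∀ t : ℝ, 0 ≤ t → ‖C t - 1‖ ≤ r) (u : ℝ) : ‖C u - 1‖ ≤ r := by
  rcases le_total 0 u with hu | hu
  · exact hbound u hu
  · simpa [cosine_neg h0 hd] using hbound (-u) (neg_nonneg.mpr hu)

end CosineFamily

theorem extended_cosine_family {X : Type*} [NormedAddCommGroup X] [NormedSpace ℝ X]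
    (C : ℝ → X →L[ℝ] X) (h0 : C 0 = 1)
    (hd : ∀ t s : ℝ, (2 : ℝ) • (C t * C s) = C (t + s) + C (t - s))
    (r : ℝ) (hbound : ∀ t : ℝ, 0 ≤ t → ‖C t - 1‖ ≤ r) :
    ∃ Cext : ℝ → (lp (fun _ : ℕ => X) 2 →L[ℝ] lp (fun _ : ℕ => X) 2),
      (∀ (t : ℝ) (x : lp (fun _ : ℕ => X) 2) (n : ℕ),
        (Cext t x : ∀ _ : ℕ, X) n = C (n * t) ((x : ∀ _ : ℕ, X) n)) ∧
      Cext 0 = 1 ∧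
      (∀ t s : ℝ, (2 : ℝ) • (Cext t * Cext s) = Cext (t + s) + Cext (t - s)) ∧
      (∀ t : ℝ, 0 ≤ t → ‖Cext t - 1‖ ≤ r) ∧
      ((∀ x : X, Continuous fun t : ℝ => C t x) →
        ∀ y : lp (fun _ : ℕ => X) 2, Continuous fun t : ℝ => Cext t y) := by
  have hr : 0 ≤ r := by simpa [h0] using hbound 0 le_rfl
  have hC1 := norm_cosine_sub_one_le h0 hd hbound
  have hC : ∀ u, ‖C u‖ ≤ 1 + r := fun u => calc
    ‖C u‖ ≤ ‖(1 : X →L[ℝ] X)‖ + ‖C u - 1‖ := norm_le_norm_add_norm_sub' _ _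
    _ ≤ 1 + r := add_le_add ContinuousLinearMap.norm_id_le (hC1 u)
  refine ⟨fun t => lp.mapCLM 2 (fun n : ℕ => C (n * t)) (by linarith) fun _ => hC _,
    fun _ _ _ => rfl, ?_, ?_, ?_, ?_⟩
  · ext x n
    simp [h0]
  · intro t s
    ext x n
    simpa [mul_add, mul_sub] using congr($(hd (n * t) (n * s)) (x n))
  · intro t _
    have hsub : lp.mapCLM 2 (fun n : ℕ => C (n * t)) (by linarith) (fun _ => hC _) - 1 =
        lp.mapCLM 2 (fun n : ℕ => C (n * t) - 1) hr fun _ => hC1 _ := by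
      ext x n
      simp
    exact hsub ▸ lp.norm_mapCLM_le ..
  · intro hcont y
    refine continuous_apply_of_norm_le_of_dense_span (fun _ => lp.norm_mapCLM_le ..)
      (lp.dense_span_single (by norm_num)) ?_ y
    simp only [Set.mem_iUnion, Set.mem_range]
    rintro _ ⟨n, v, rfl⟩
    simp only [lp.mapCLM_single]
    exact (lp.isometry_single n).continuous.comp ((hcont v).comp (continuous_const_mul _))
end
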